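/- arXiv:2209.15117 — 3 statements merged into one kernel-verified Lean document; each statement's English description precedes it below -/
import Mathlib

section
/- (Lower bound of the 1/2-divergence.) For all constants 0 < c < C there exists K > 0, depending only on c and C, such that for all a, b ∈ [c, C], D_{1/2}(p_a, p_b) ≥ K (a − b)². -/
/-- The logistic function `x ↦ 1/(1 + e^{−x})`. -/
noncomputable def logistic (x : ℝ) : ℝ := 1 / (1 + Real.exp (-x))

/-- Rényi divergence of order `1/2` between `Bernoulli(p)` and `Bernoulli(q)`. -/
noncomputable def renyiHalf (p q : ℝ) : ℝ :=
  -2 * Real.log (Real.sqrt (p * q) + Real.sqrt ((1 - p) * (1 - q)))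

/-!
By `log s ≤ s - 1`, `D_{1/2}(p, q)` is at least twice one minus the Bhattacharyya coefficient,
which is the squared Hellinger distance `(√p - √q)² + (√(1-p) - √(1-q))² ≥ (p - q)² / 4`.
The logistic function is the sigmoid `σ`, whose derivative `σ (1 - σ)` is at least
`k = σ(c) (1 - σ(C))` on `[c, C]`; by the mean value theorem `|p_a - p_b| ≥ k |a - b|` there,
so `K = k² / 4` works.
-/

open Real Set

section Hellinger

variable {p q : ℝ}

lemma sq_sub_le_four_mul_sq_sqrt_sub (hp0 : 0 ≤ p) (hp1 : p ≤ 1) (hq0 : 0 ≤ q) (hq1 : q ≤ 1) :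
    (p - q) ^ 2 ≤ 4 * (√p - √q) ^ 2 := by
  have hsum : (√p + √q) ^ 2 ≤ 4 := by
    nlinarith [sqrt_le_one.mpr hp1, sqrt_le_one.mpr hq1, sqrt_nonneg p, sqrt_nonneg q]
  calc (p - q) ^ 2 = (√p - √q) ^ 2 * (√p + √q) ^ 2 := by
        rw [← mul_pow]; congr 1; linear_combination -(sq_sqrt hp0) + sq_sqrt hq0
    _ ≤ (√p - √q) ^ 2 * 4 := by gcongr
    _ = 4 * (√p - √q) ^ 2 := mul_comm _ _

lemma two_mul_one_sub_bhattacharyya (hp0 : 0 ≤ p) (hp1 : p ≤ 1) (hq0 : 0 ≤ q) (hq1 : q ≤ 1) :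
    2 * (1 - (√(p * q) + √((1 - p) * (1 - q))))
      = (√p - √q) ^ 2 + (√(1 - p) - √(1 - q)) ^ 2 := by
  rw [sqrt_mul hp0, sqrt_mul (sub_nonneg.mpr hp1)]
  linear_combination -(sq_sqrt hp0) - sq_sqrt hq0 - sq_sqrt (sub_nonneg.mpr hp1)
    - sq_sqrt (sub_nonneg.mpr hq1)

lemma sq_sub_div_four_le_renyiHalf (hp0 : 0 < p) (hp1 : p ≤ 1) (hq0 : 0 < q) (hq1 : q ≤ 1) :
    (p - q) ^ 2 / 4 ≤ renyiHalf p q := by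
  have hs_pos : 0 < √(p * q) + √((1 - p) * (1 - q)) :=
    add_pos_of_pos_of_nonneg (sqrt_pos.mpr (mul_pos hp0 hq0)) (sqrt_nonneg _)
  calc (p - q) ^ 2 / 4 ≤ (√p - √q) ^ 2 := by
        linarith [sq_sub_le_four_mul_sq_sqrt_sub hp0.le hp1 hq0.le hq1]
    _ ≤ (√p - √q) ^ 2 + (√(1 - p) - √(1 - q)) ^ 2 := le_add_of_nonneg_right (sq_nonneg _)
    _ = 2 * (1 - (√(p * q) + √((1 - p) * (1 - q)))) :=
        (two_mul_one_sub_bhattacharyya hp0.le hp1 hq0.le hq1).symm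
    _ ≤ renyiHalf p q := by
        unfold renyiHalf
        linarith [log_le_sub_one_of_pos hs_pos]

end Hellinger

lemma logistic_eq_sigmoid : logistic = sigmoid := by
  funext x
  rw [logistic, sigmoid_def, one_div]

lemma mul_abs_sub_le_abs_sigmoid_sub {c C a b : ℝ} (ha : a ∈ Icc c C) (hb : b ∈ Icc c C) :
    sigmoid c * (1 - sigmoid C) * |a - b| ≤ |sigmoid a - sigmoid b| := by
  wlog hba : b ≤ a generalizing a b
  · rw [abs_sub_comm a, abs_sub_comm (sigmoid a)]
    exact this hb ha (le_of_not_ge hba)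
  have hderiv : ∀ x ∈ interior (Icc c C), sigmoid c * (1 - sigmoid C) ≤ deriv sigmoid x := by
    intro x hx
    rw [interior_Icc] at hx
    rw [deriv_sigmoid]
    exact mul_le_mul (sigmoid_le hx.1.le) (sub_le_sub_left (sigmoid_le hx.2.le) 1)
      (sub_nonneg.mpr (sigmoid_le_one C)) (sigmoid_nonneg x)
  have hmvt := (convex_Icc c C).mul_sub_le_image_sub_of_le_deriv
    continuous_sigmoid.continuousOn differentiable_sigmoid.differentiableOn hderiv b hb a ha hba
  rwa [abs_of_nonneg (sub_nonneg.mpr hba), abs_of_nonneg (sub_nonneg.mpr (sigmoid_le hba))]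

theorem renyiHalf_lower_bound_general (c C : ℝ) :
    ∃ K : ℝ, 0 < K ∧ ∀ a b : ℝ, a ∈ Set.Icc c C → b ∈ Set.Icc c C →
      K * (a - b) ^ 2 ≤ renyiHalf (logistic a) (logistic b) := by
  set k := sigmoid c * (1 - sigmoid C)
  have hk : 0 < k := mul_pos (sigmoid_pos c) (sub_pos.mpr (sigmoid_lt_one C))
  refine ⟨k ^ 2 / 4, by positivity, fun a b ha hb => ?_⟩
  rw [logistic_eq_sigmoid]
  calc k ^ 2 / 4 * (a - b) ^ 2 = (k * |a - b|) ^ 2 / 4 := by rw [mul_pow k, sq_abs]; ring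
    _ ≤ |sigmoid a - sigmoid b| ^ 2 / 4 := by
        gcongr
        exact mul_abs_sub_le_abs_sigmoid_sub ha hb
    _ = (sigmoid a - sigmoid b) ^ 2 / 4 := by rw [sq_abs]
    _ ≤ renyiHalf (sigmoid a) (sigmoid b) :=
        sq_sub_div_four_le_renyiHalf (sigmoid_pos a) (sigmoid_le_one a) (sigmoid_pos b)
          (sigmoid_le_one b)

/-- Lower bound of the `1/2`-divergence: for `a, b` in a compact interval `[c, C]` with
`0 < c < C`, `D_{1/2}(p_a, p_b) ≥ K (a − b)²` for some `K > 0` depending only on `c, C`. -/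
theorem renyiHalf_lower_bound (c C : ℝ) (hc : 0 < c) (hcC : c < C) :
    ∃ K : ℝ, 0 < K ∧ ∀ a b : ℝ, a ∈ Set.Icc c C → b ∈ Set.Icc c C →
      K * (a - b) ^ 2 ≤ renyiHalf (logistic a) (logistic b) :=
  renyiHalf_lower_bound_general c C
end

section
/- (Sparse Varshamov–Gilbert bound.) Let n and s be integers with 1 ≤ s ≤ n/4. Then there exists a finite subset {w^{(1)}, …, w^{(M)}} of {0,1}^n such that: (i) each w^{(i)} has exactly s nonzero coordinates; (ii) the Hamming distance between w^{(i)} and w^{(j)} is at least s/2 for all 1 ≤ i ≠ j ≤ M; and (iii) log M ≥ 0.233 · s · log(n/s). -/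
/-!
Put `q = ⌊n/s⌋ ≥ 4`. A code in `(Fin q)^s` of minimum distance `> ⌊s/4⌋` that is maximal for
inclusion has covering radius `⌊s/4⌋`, so `q^s ≤ M · |B(⌊s/4⌋)|`; weighting each word `u` by
`(3q)^(-d(u, c))` bounds the ball by `(3q)^(s/4) (4/3)^s`. Writing each codeword in one-hot form,
one block of `q` coordinates per letter, gives `s`-sparse binary words of length `sq ≤ n` whose
distances are twice the `q`-ary ones, hence `≥ s/2`, and
`log M ≥ s (3/4 log q - 1/4 log 3 - log (4/3)) ≥ 0.233 s log (n/s)`.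
-/

open Finset Function Real

section HammingBall

variable {ι α : Type*} [Fintype ι] [DecidableEq ι] [Fintype α] [DecidableEq α]

theorem sum_pow_hammingDist (c : ι → α) (x : ℝ) :
    ∑ u : ι → α, x ^ hammingDist u c = (1 + (Fintype.card α - 1) * x) ^ Fintype.card ι := by
  have hprod (u : ι → α) : x ^ hammingDist u c = ∏ i, if u i = c i then 1 else x := by
    rw [prod_ite, prod_const_one, prod_const, one_mul]; rfl
  have hfactor (i : ι) : ∑ a : α, (if a = c i then 1 else x) = 1 + (Fintype.card α - 1) * x := by
    have (a : α) : (if a = c i then 1 else x) = x + if a = c i then 1 - x else 0 := by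
      split_ifs <;> ring
    simp only [this, sum_add_distrib, sum_ite_eq', mem_univ, if_true, sum_const, card_univ,
      nsmul_eq_mul]
    ring
  simp only [hprod, ← Fintype.prod_sum (fun i a => if a = c i then (1 : ℝ) else x), hfactor,
    prod_const, card_univ]

theorem card_hammingBall_mul_pow_le (c : ι → α) (r : ℕ) {x : ℝ} (hx₀ : 0 ≤ x) (hx₁ : x ≤ 1) :
    (#{u | hammingDist u c ≤ r} : ℝ) * x ^ r ≤ (1 + (Fintype.card α - 1) * x) ^ Fintype.card ι := by
  rw [← sum_pow_hammingDist c x]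
  calc (#{u | hammingDist u c ≤ r} : ℝ) * x ^ r = ∑ u ∈ {u | hammingDist u c ≤ r}, x ^ r := by
        rw [sum_const, nsmul_eq_mul]
    _ ≤ ∑ u ∈ {u | hammingDist u c ≤ r}, x ^ hammingDist u c :=
        sum_le_sum fun u hu => pow_le_pow_of_le_one hx₀ hx₁ (mem_filter.mp hu).2
    _ ≤ ∑ u : ι → α, x ^ hammingDist u c :=
        sum_le_sum_of_subset_of_nonneg (filter_subset _ _) fun _ _ _ => by positivity

theorem card_hammingBall_le [Nonempty α] (c : ι → α) (r : ℕ) :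
    (#{u | hammingDist u c ≤ r} : ℝ) ≤ (3 * Fintype.card α) ^ r * (4 / 3) ^ Fintype.card ι := by
  have hq : (1 : ℝ) ≤ Fintype.card α := by exact_mod_cast Fintype.card_pos
  have hx₁ : 1 / (3 * Fintype.card α : ℝ) ≤ 1 := by
    rw [div_le_one (by positivity)]; linarith
  have hbase : 1 + (Fintype.card α - 1) * (1 / (3 * Fintype.card α : ℝ)) ≤ 4 / 3 := by
    rw [mul_one_div, ← le_sub_iff_add_le', div_le_iff₀ (by positivity)]; linarith
  have h := (card_hammingBall_mul_pow_le c r (by positivity) hx₁).trans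
    (pow_le_pow_left₀ (by positivity) hbase _)
  rwa [div_pow, one_pow, mul_one_div, div_le_iff₀ (by positivity), mul_comm] at h

end HammingBall

section Packing

variable {ι α : Type*} [Fintype ι] [DecidableEq ι] [Fintype α] [DecidableEq α]

theorem exists_pairwise_lt_hammingDist_covering (r : ℕ) :
    ∃ C : Finset (ι → α), (C : Set (ι → α)).Pairwise (fun x y => r < hammingDist x y) ∧
      ∀ v, ∃ c ∈ C, hammingDist v c ≤ r := by
  obtain ⟨C, -, hCmax⟩ := Finite.exists_le_maximal
    (p := fun C : Finset (ι → α) => (C : Set (ι → α)).Pairwise (fun x y => r < hammingDist x y))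
    (a := ∅) (by simp)
  refine ⟨C, hCmax.prop, fun v => ?_⟩
  by_contra! hfar
  have hv : v ∉ C := fun hv => by simpa using hfar v hv
  have hins : ((insert v C : Finset (ι → α)) : Set (ι → α)).Pairwise
      (fun x y => r < hammingDist x y) := by
    rw [coe_insert]
    exact hCmax.prop.insert fun c hc _ => ⟨hfar c hc, hammingDist_comm v c ▸ hfar c hc⟩
  exact hv (hCmax.eq_of_le hins (subset_insert v C) ▸ mem_insert_self v C)

theorem exists_gilbertVarshamov_code [Nonempty α] (r : ℕ) :
    ∃ C : Finset (ι → α), (C : Set (ι → α)).Pairwise (fun x y => r < hammingDist x y) ∧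
      (Fintype.card α : ℝ) ^ Fintype.card ι
        ≤ #C * ((3 * Fintype.card α) ^ r * (4 / 3) ^ Fintype.card ι) := by
  obtain ⟨C, hC, hcover⟩ := exists_pairwise_lt_hammingDist_covering (ι := ι) (α := α) r
  refine ⟨C, hC, ?_⟩
  have hunion : (univ : Finset (ι → α)) ⊆ C.biUnion fun c => {u | hammingDist u c ≤ r} :=
    fun v _ => by simpa using hcover v
  calc (Fintype.card α : ℝ) ^ Fintype.card ι = #(univ : Finset (ι → α)) := by simp
    _ ≤ ∑ c ∈ C, (#{u | hammingDist u c ≤ r} : ℝ) := by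
        exact_mod_cast (card_le_card hunion).trans card_biUnion_le
    _ ≤ ∑ c ∈ C, (3 * Fintype.card α : ℝ) ^ r * (4 / 3) ^ Fintype.card ι :=
        sum_le_sum fun c _ => card_hammingBall_le c r
    _ = #C * ((3 * Fintype.card α) ^ r * (4 / 3) ^ Fintype.card ι) := by
        rw [sum_const, nsmul_eq_mul]

end Packing

section OneHot

variable {ι α : Type*} [Fintype ι] [Fintype α] [DecidableEq α]

def oneHot (x : ι → α) : ι × α → Bool := fun p => decide (x p.1 = p.2)

theorem hammingDist_oneHot_false (x : ι → α) :
    hammingDist (oneHot x) (fun _ => false) = Fintype.card ι := by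
  simp only [hammingDist, oneHot, ne_eq, decide_eq_false_iff_not, not_not]
  rw [← card_univ (α := ι), ← card_map ⟨fun i => (i, x i), fun i j h => (Prod.ext_iff.mp h).1⟩]
  congr 1
  ext ⟨i, a⟩
  simp only [mem_filter, mem_univ, true_and, mem_map, Prod.ext_iff]
  exact ⟨fun h => ⟨i, rfl, h⟩, fun ⟨_, hi, ha⟩ => hi ▸ ha⟩

theorem hammingDist_oneHot (x y : ι → α) :
    hammingDist (oneHot x) (oneHot y) = 2 * hammingDist x y := by
  have hblock (i : ι) :
      #{a | oneHot x (i, a) ≠ oneHot y (i, a)} = if x i = y i then 0 else 2 := by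
    split_ifs with h
    · simp [oneHot, h]
    · rw [← card_pair h]
      congr 1
      ext a
      by_cases ha : x i = a <;> by_cases hb : y i = a <;> simp_all [oneHot, eq_comm]
  calc hammingDist (oneHot x) (oneHot y) = ∑ i, #{a | oneHot x (i, a) ≠ oneHot y (i, a)} := by
        simp only [hammingDist, card_filter, Fintype.sum_prod_type]
    _ = ∑ i, if x i = y i then 0 else 2 := by simp only [hblock]
    _ = 2 * hammingDist x y := by
        rw [hammingDist, card_filter, mul_sum]
        exact sum_congr rfl fun i _ => by split_ifs <;> simp_all

end OneHot

theorem hammingDist_extend {κ ι β : Type*} [Fintype κ] [Fintype ι] [DecidableEq β] {e : κ → ι}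
    (he : Injective e) (f g : κ → β) (b : ι → β) :
    hammingDist (extend e f b) (extend e g b) = hammingDist f g := by
  rw [hammingDist, hammingDist, ← card_map ⟨e, he⟩]
  congr 1
  ext i
  simp only [mem_filter, mem_univ, true_and, mem_map, Embedding.coeFn_mk]
  constructor
  · intro h
    by_cases hi : ∃ k, e k = i
    · obtain ⟨k, rfl⟩ := hi
      exact ⟨k, by rwa [he.extend_apply, he.extend_apply] at h, rfl⟩
    · exact absurd (by rw [extend_apply' _ _ _ hi, extend_apply' _ _ _ hi]) h
  · rintro ⟨k, hk, rfl⟩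
    rwa [he.extend_apply, he.extend_apply]

section SparseWords

variable {ι α κ : Type*} [Fintype ι] [Fintype α] [DecidableEq α] [Fintype κ] {e : ι × α → κ}

theorem card_extend_oneHot_eq_true (he : Injective e) (x : ι → α) :
    #{k | extend e (oneHot x) (fun _ => false) k = true} = Fintype.card ι := by
  have h := hammingDist_extend he (oneHot x) (fun _ => false) fun _ => false
  rw [extend_const, hammingDist_oneHot_false] at h
  simpa [hammingDist] using h

theorem hammingDist_extend_oneHot (he : Injective e) (x y : ι → α) (b : κ → Bool) :
    hammingDist (extend e (oneHot x) b) (extend e (oneHot y) b) = 2 * hammingDist x y :=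
  (hammingDist_extend he _ _ _).trans (hammingDist_oneHot x y)

end SparseWords

theorem mul_log_add_one_le_of_four_le {q : ℝ} (hq : 4 ≤ q) :
    0.233 * log (q + 1) ≤ 3 / 4 * log q - 1 / 4 * log 3 - log (4 / 3) := by
  have hq₀ : 0 < q := by linarith
  have hsucc : log (q + 1) ≤ log q + 1 / 4 := by
    have h := log_le_sub_one_of_pos (show 0 < (q + 1) / q by positivity)
    rw [log_div (by positivity) hq₀.ne', add_div, div_self hq₀.ne'] at h
    have : 1 / q ≤ 1 / 4 := one_div_le_one_div_of_le (by norm_num) hq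
    linarith
  have hlog43 : log (4 / 3) ≤ 1 / 3 := by
    linarith [log_le_sub_one_of_pos (show (0 : ℝ) < 4 / 3 by norm_num)]
  have hlog3 : log 3 ≤ log 2 + 1 / 2 := by
    have h := log_le_sub_one_of_pos (show (0 : ℝ) < 3 / 2 by norm_num)
    rw [log_div (by norm_num) (by norm_num)] at h
    linarith
  have hlogq : 2 * log 2 ≤ log q := by
    rw [← log_rpow zero_lt_two]
    exact log_le_log (by positivity) (by norm_num; linarith)
  linarith [log_two_gt_d9, log_two_lt_d9]

theorem mul_log_add_one_le_log_of_pow_le {q M : ℝ} {s r : ℕ} (hq : 4 ≤ q) (hr : 4 * r ≤ s)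
    (h : q ^ s ≤ M * ((3 * q) ^ r * (4 / 3) ^ s)) :
    0.233 * s * log (q + 1) ≤ log M := by
  have hM : 0 < M := pos_of_mul_pos_left ((by positivity : 0 < q ^ s).trans_le h) (by positivity)
  have hlog : s * log q ≤ log M + r * (log 3 + log q) + s * log (4 / 3) := by
    have h' := log_le_log (by positivity) h
    rw [log_pow, log_mul hM.ne' (by positivity), log_mul (by positivity) (by positivity),
      log_pow, log_pow, log_mul (by norm_num) (by positivity)] at h'
    linarith
  have hr' : (r : ℝ) ≤ s / 4 := by
    rw [le_div_iff₀ (by norm_num)]; exact_mod_cast (mul_comm 4 r ▸ hr)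
  have hlog₀ : 0 ≤ log 3 + log q := by
    have := log_nonneg (show (1 : ℝ) ≤ 3 by norm_num)
    have := log_nonneg (show (1 : ℝ) ≤ q by linarith)
    linarith
  have hconst := mul_log_add_one_le_of_four_le hq
  nlinarith [mul_le_mul_of_nonneg_right hr' hlog₀, (Nat.cast_nonneg s : (0 : ℝ) ≤ s)]

/-- Sparse Varshamov–Gilbert bound: for `1 ≤ s ≤ n/4` there exist binary vectors
`w⁽¹⁾, …, w⁽ᴹ⁾ ∈ {0,1}ⁿ`, each with exactly `s` nonzero coordinates, pairwise Hamming
distance at least `s/2`, and `log M ≥ 0.233 · s · log(n/s)`. -/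
theorem sparse_varshamov_gilbert (n s : ℕ) (hs : 1 ≤ s) (hsn : (s : ℝ) ≤ (n : ℝ) / 4) :
    ∃ (M : ℕ) (w : Fin M → (Fin n → Bool)),
      (∀ i : Fin M, (Finset.univ.filter fun k => w i k = true).card = s)
      ∧ (∀ i j : Fin M, i ≠ j →
          (s : ℝ) / 2 ≤ ((Finset.univ.filter fun k => w i k ≠ w j k).card : ℝ))
      ∧ 0.233 * s * Real.log ((n : ℝ) / s) ≤ Real.log M := by
  have hs₀ : 0 < s := hs
  set q := n / s
  have hq : 4 ≤ q :=
    (Nat.le_div_iff_mul_le hs₀).mpr (by exact_mod_cast (by linarith : (4 * s : ℝ) ≤ n))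
  have hsq : s * q ≤ n := mul_comm q s ▸ Nat.div_mul_le_self n s
  have hnq : (n : ℝ) / s ≤ q + 1 := by
    rw [div_le_iff₀ (by positivity), add_one_mul]
    exact_mod_cast (Nat.lt_div_mul_add hs₀).le
  have : NeZero q := ⟨by omega⟩
  obtain ⟨C, hC, hcard⟩ := exists_gilbertVarshamov_code (ι := Fin s) (α := Fin q) (s / 4)
  simp only [Fintype.card_fin] at hcard
  let e : Fin s × Fin q ↪ Fin n := finProdFinEquiv.toEmbedding.trans (Fin.castLEEmb hsq)
  let code (i : Fin #C) : Fin s → Fin q := C.equivFin.symm i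
  let w (i : Fin #C) : Fin n → Bool := extend e (oneHot (code i)) fun _ => false
  refine ⟨#C, w, fun i => ?_, fun i j hij => ?_, ?_⟩
  · exact (card_extend_oneHot_eq_true e.injective (code i)).trans (Fintype.card_fin s)
  · have hcode : code i ≠ code j := fun h => hij (C.equivFin.symm.injective (Subtype.ext h))
    have hd : s / 4 < hammingDist (code i) (code j) :=
      hC (C.equivFin.symm i).2 (C.equivFin.symm j).2 hcode
    have h : hammingDist (w i) (w j) = 2 * hammingDist (code i) (code j) :=
      hammingDist_extend_oneHot e.injective _ _ _
    rw [div_le_iff₀ two_pos]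
    exact_mod_cast (show s ≤ hammingDist (w i) (w j) * 2 by omega)
  · calc 0.233 * s * log (n / s) ≤ 0.233 * s * log (q + 1) := by
          have : (1 : ℝ) ≤ s := by exact_mod_cast hs
          gcongr
          exact div_pos (by linarith) (by positivity)
      _ ≤ log #C :=
          mul_log_add_one_le_log_of_pow_le (by exact_mod_cast hq) (Nat.mul_div_le s 4) hcard
end

section
/- (Separation of the constructed test hypotheses.) Let q, s ≥ 1 be integers and ε > 0. Let w¹, w² ∈ {0,1}^q each have exactly s nonzero coordinates, and suppose the Hamming distance between w¹ and w² is at least s/2. Then Σ_{1 ≤ i ≠ j ≤ 2q} ( v^{w¹}_i v^{w¹}_j − v^{w²}_i v^{w²}_j )² ≥ s q ε² / 2, where the sum is over ordered pairs (i, j) with i ≠ j. -/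
/-!
Only the pairs `(i, q + k)` with `i < q` are needed: there `v^{w}_i = 1`, so the summand is
`ε² (w¹_k − w²_k)²`, which is `ε²` exactly when `w¹` and `w²` differ at `k`. These pairs
alone contribute `q ε² d_H(w¹, w²) ≥ s q ε² / 2`.
-/

/-- The constructed vector `v^w ∈ ℝ^{2q}`: first `q` coordinates equal to `1`, and
coordinate `q+i` equal to `ε·w_i`. -/
noncomputable def vConstr (q : ℕ) (ε : ℝ) (w : Fin q → Bool) (i : Fin (2 * q)) : ℝ :=
  if h : (i : ℕ) < q then 1
  else ε * (if w ⟨(i : ℕ) - q, by have := i.isLt; omega⟩ then 1 else 0)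

open Finset

theorem Finset.sum_sum_le_sum_sum_erase {ι M : Type*} [Fintype ι] [DecidableEq ι]
    [AddCommMonoid M] [PartialOrder M] [IsOrderedAddMonoid M] {f : ι → ι → M}
    (hf : ∀ i j, 0 ≤ f i j) {A B : Finset ι} (hAB : Disjoint A B) :
    ∑ i ∈ A, ∑ j ∈ B, f i j ≤ ∑ i, ∑ j ∈ univ.erase i, f i j := calc
  ∑ i ∈ A, ∑ j ∈ B, f i j ≤ ∑ i ∈ A, ∑ j ∈ univ.erase i, f i j :=
    sum_le_sum fun i hi => sum_le_sum_of_subset_of_nonneg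
      (fun j hj => mem_erase.mpr ⟨fun hji => disjoint_left.mp hAB hi (hji ▸ hj), mem_univ j⟩)
      (fun j _ _ => hf i j)
  _ ≤ ∑ i, ∑ j ∈ univ.erase i, f i j :=
    sum_le_sum_of_subset_of_nonneg (subset_univ A) fun i _ _ => sum_nonneg fun j _ => hf i j

section vConstr

variable {q : ℕ} {ε : ℝ} (w : Fin q → Bool)

theorem vConstr_castLE (h : q ≤ 2 * q) (k : Fin q) : vConstr q ε w (Fin.castLE h k) = 1 :=
  dif_pos k.isLt

theorem vConstr_of_val_eq_add {i : Fin (2 * q)} {k : Fin q} (hik : (i : ℕ) = q + k) :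
    vConstr q ε w i = ε * if w k then 1 else 0 := by
  have hk : (⟨(i : ℕ) - q, by omega⟩ : Fin q) = k := Fin.ext (by simp [hik])
  rw [vConstr, dif_neg (by omega), hk]

def upperEmb (q : ℕ) : Fin q ↪ Fin (2 * q) :=
  (Fin.natAddEmb q).trans (Fin.castLEEmb (by omega))

theorem vConstr_upperEmb (k : Fin q) :
    vConstr q ε w (upperEmb q k) = ε * if w k then 1 else 0 :=
  vConstr_of_val_eq_add w (by simp [upperEmb, add_comm])

end vConstr

theorem sq_sub_boole_mul (ε : ℝ) (a b : Bool) :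
    (ε * (if a then 1 else 0) - ε * (if b then 1 else 0)) ^ 2 = ε ^ 2 * if a ≠ b then 1 else 0 := by
  cases a <;> cases b <;> simp

theorem hamming_mul_le_sum_sq_sub (q : ℕ) (ε : ℝ) (w₁ w₂ : Fin q → Bool) :
    q * ε ^ 2 * (univ.filter fun k => w₁ k ≠ w₂ k).card ≤
      ∑ i : Fin (2 * q), ∑ j ∈ univ.erase i,
        (vConstr q ε w₁ i * vConstr q ε w₁ j - vConstr q ε w₂ i * vConstr q ε w₂ j) ^ 2 := by
  have hdisj : Disjoint (univ.map (Fin.castLEEmb (by omega : q ≤ 2 * q))) (univ.map (upperEmb q)) :=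
    disjoint_left.mpr fun i hi hi' => by
      obtain ⟨k, -, rfl⟩ := mem_map.mp hi
      obtain ⟨l, -, hl⟩ := mem_map.mp hi'
      have := congrArg Fin.val hl
      simp only [upperEmb, Function.Embedding.trans_apply, Fin.natAddEmb_apply,
        Fin.natAdd_eq_addNat, Fin.castLEEmb_apply, Fin.val_castLE, Fin.val_addNat] at this
      omega
  refine le_of_eq_of_le ?_ (sum_sum_le_sum_sum_erase (fun _ _ => sq_nonneg _) hdisj)
  simp only [sum_map, Fin.castLEEmb_apply, vConstr_castLE, vConstr_upperEmb, one_mul,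
    sq_sub_boole_mul, ← mul_sum, sum_boole, sum_const, card_univ, Fintype.card_fin, nsmul_eq_mul]
  ring

theorem separation_of_hypotheses_general (q s : ℕ) (ε : ℝ)
    (w₁ w₂ : Fin q → Bool)
    (hham : (s : ℝ) / 2 ≤ ((Finset.univ.filter fun k => w₁ k ≠ w₂ k).card : ℝ)) :
    (s : ℝ) * q * ε ^ 2 / 2 ≤
      ∑ i : Fin (2 * q), ∑ j ∈ Finset.univ.erase i,
        (vConstr q ε w₁ i * vConstr q ε w₁ j - vConstr q ε w₂ i * vConstr q ε w₂ j) ^ 2 := by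
  refine le_trans ?_ (hamming_mul_le_sum_sq_sub q ε w₁ w₂)
  have hqε : 0 ≤ (q : ℝ) * ε ^ 2 := by positivity
  linarith [mul_le_mul_of_nonneg_left hham hqε]

/-- Separation of the constructed test hypotheses: if `w¹, w²` each have exactly `s`
nonzero coordinates and Hamming distance at least `s/2`, then
`Σ_{i ≠ j} (v^{w¹}_i v^{w¹}_j − v^{w²}_i v^{w²}_j)² ≥ s q ε² / 2`. -/
theorem separation_of_hypotheses (q s : ℕ) (hq : 1 ≤ q) (hs : 1 ≤ s) (ε : ℝ) (hε : 0 < ε)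
    (w₁ w₂ : Fin q → Bool)
    (hw₁ : (Finset.univ.filter fun k => w₁ k = true).card = s)
    (hw₂ : (Finset.univ.filter fun k => w₂ k = true).card = s)
    (hham : (s : ℝ) / 2 ≤ ((Finset.univ.filter fun k => w₁ k ≠ w₂ k).card : ℝ)) :
    (s : ℝ) * q * ε ^ 2 / 2 ≤
      ∑ i : Fin (2 * q), ∑ j ∈ Finset.univ.erase i,
        (vConstr q ε w₁ i * vConstr q ε w₁ j - vConstr q ε w₂ i * vConstr q ε w₂ j) ^ 2 :=
  separation_of_hypotheses_general q s ε w₁ w₂ hham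
end
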